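/- Let (Λ,η) be a special isothermic surface in S^n of type d ∈ ℕ with respect to a polynomial conserved quantity p(t) such that p(0) is a nonzero element of ⟨v_∞⟩ and 0 is a repeated root of the polynomial (p(t),p(t)). Then the Christoffel transform (Λ^c,η^c) of (Λ,η) with respect to (v_∞,v_0) is a special isothermic surface of type d−1. -/

import Mathlib

noncomputable section

open Finset

/-- Minkowski space `ℝ^{n+1,1}`, modelled on `Fin (n+2) → ℝ`. -/
abbrev MV (n : ℕ) : Type := EuclideanSpace ℝ (Fin (n + 2))

/-- The Minkowski inner product of signature `(n+1,1)`. -/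
def mink (n : ℕ) (x y : MV n) : ℝ :=
  ∑ i : Fin (n + 1), x i.castSucc * y i.castSucc
    - x (Fin.last (n + 1)) * y (Fin.last (n + 1))

/-- The light cone `L ⊂ ℝ^{n+1,1}`. -/
def LightCone (n : ℕ) : Set (MV n) := {v | v ≠ 0 ∧ mink n v v = 0}

/-- The skew endomorphism `u ∧ v`, acting by `(u ∧ v) w = (u,w)v − (v,w)u`. -/
def wedge (n : ℕ) (u v w : MV n) : MV n :=
  mink n u w • v - mink n v w • u

/-- The surface domain: a two-dimensional coordinate chart. -/
abbrev Surf : Type := ℝ × ℝ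

/-- the coordinate direction ∂/∂u -/
def du : Surf := (1, 0)

/-- the coordinate direction ∂/∂v -/
def dv : Surf := (0, 1)

/-- partial derivative of a section in a coordinate direction -/
def pd {n : ℕ} (e : Surf) (f : Surf → MV n) (x : Surf) : MV n :=
  fderiv ℝ f x e

lemma mink_add_left (n : ℕ) (a b c : MV n) :
    mink n (a + b) c = mink n a c + mink n b c := by
  simp [mink, PiLp.add_apply, add_mul, Finset.sum_add_distrib]; ring

lemma mink_smul_left (n : ℕ) (r : ℝ) (a c : MV n) :
    mink n (r • a) c = r * mink n a c := by
  simp [mink, PiLp.smul_apply, smul_eq_mul, mul_sub, Finset.mul_sum, mul_assoc]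

lemma mink_zero_left (n : ℕ) (c : MV n) : mink n 0 c = 0 := by
  simp [mink]

/-- An isothermic surface `(Λ,η)` in `S^n = P(L)`, given by a nowhere-zero null
lift `F` of the immersion `Λ` together with the 1-form
`η = F ∧ W₁ du + F ∧ W₂ dv` with values in `Λ ∧ Λ^⊥`. -/
structure IsothermicSurface (n : ℕ) : Type where
  F : Surf → MV n
  W₁ : Surf → MV n
  W₂ : Surf → MV n
  smooth_F : ContDiff ℝ (⊤ : ℕ∞) F
  smooth_W₁ : ContDiff ℝ (⊤ : ℕ∞) W₁
  smooth_W₂ : ContDiff ℝ (⊤ : ℕ∞) W₂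
  F_ne : ∀ x, F x ≠ 0
  F_null : ∀ x, mink n (F x) (F x) = 0
  immersed : ∀ x, LinearIndependent ℝ ![F x, pd du F x, pd dv F x]
  W₁_perp : ∀ x, mink n (F x) (W₁ x) = 0
  W₂_perp : ∀ x, mink n (F x) (W₂ x) = 0
  eta_ne : ∃ x z, wedge n (F x) (W₁ x) z ≠ 0 ∨ wedge n (F x) (W₂ x) z ≠ 0
  eta_closed : ∀ x z,
    fderiv ℝ (fun y => wedge n (F y) (W₂ y) z) x du
      = fderiv ℝ (fun y => wedge n (F y) (W₁ y) z) x dv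

/-- `s` is a parallel section for the flat connection `∇^t = d + tη`. -/
def ParallelSection (n : ℕ) (S : IsothermicSurface n) (t : ℝ)
    (s : Surf → MV n) : Prop :=
  ∀ x, fderiv ℝ s x du + t • wedge n (S.F x) (S.W₁ x) (s x) = 0
     ∧ fderiv ℝ s x dv + t • wedge n (S.F x) (S.W₂ x) (s x) = 0

/-- A polynomial conserved quantity of degree `d` of the isothermic surface
`(Λ,η)`: a polynomial `p(t) = Σ_{k=0}^d p_k t^k` of (smooth) sections, of exact
degree `d`, with `∇^t p(t) = 0` for all `t`. -/
structure PolyConservedQuantity (n : ℕ) (S : IsothermicSurface n) (d : ℕ) : Type where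
  coeff : ℕ → Surf → MV n
  smooth : ∀ k, ContDiff ℝ (⊤ : ℕ∞) (coeff k)
  coeff_eq_zero : ∀ k, d < k → coeff k = 0
  top_ne : coeff d ≠ 0
  conserved : ∀ t : ℝ, ParallelSection n S t
    (fun x => ∑ k ∈ Finset.range (d + 1), t ^ k • coeff k x)

/-- evaluation `p(t)` of a polynomial conserved quantity -/
def pcEval {n : ℕ} {S : IsothermicSurface n} {d : ℕ}
    (p : PolyConservedQuantity n S d) (t : ℝ) (x : Surf) : MV n :=
  ∑ k ∈ Finset.range (d + 1), t ^ k • p.coeff k x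

/-- `(Λ,η)` is a special isothermic surface of type `d`. -/
def SpecialOfType (n : ℕ) (S : IsothermicSurface n) (d : ℕ) : Prop :=
  Nonempty (PolyConservedQuantity n S d)

/-- `p₀ ∈ ⟨w⟩`: the polynomial conserved quantity exhibits `(Λ,η)` as special
isothermic in the space-form `E(w)`. -/
def InSpaceForm {n : ℕ} {S : IsothermicSurface n} {d : ℕ}
    (p : PolyConservedQuantity n S d) (w : MV n) : Prop :=
  ∃ c : ℝ, ∀ x, p.coeff 0 x = c • w

/-- fullness: the image of `Λ` lies in no proper subsphere -/
def Full (n : ℕ) (S : IsothermicSurface n) : Prop :=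
  ¬ ∃ p : MV n, p ≠ 0 ∧ ∀ x, mink n p (S.F x) = 0
/-- A Darboux transform `Λ̂` of `(Λ,η)` with parameter `m`, given by a
`∇^m`-parallel null lift `G` spanning an immersed surface with `Λ̂ ∩ Λ = 0`. -/
structure DarbouxTransform (n : ℕ) (S : IsothermicSurface n) (m : ℝ) : Type where
  G : Surf → MV n
  smooth_G : ContDiff ℝ (⊤ : ℕ∞) G
  G_ne : ∀ x, G x ≠ 0
  G_null : ∀ x, mink n (G x) (G x) = 0
  immersed : ∀ x, LinearIndependent ℝ ![G x, pd du G x, pd dv G x]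
  disjoint : ∀ x, G x ∉ Submodule.span ℝ {S.F x}
  parallel : ParallelSection n S m G

/-- The gauge transformation `Γ_{⟨F⟩}^{⟨G⟩}(c)`: acts as `c` on `⟨G⟩`, as `1` on
`(⟨F⟩ ⊕ ⟨G⟩)^⊥` and as `c⁻¹` on `⟨F⟩`. -/
def gaugeG (n : ℕ) (F G : MV n) (c : ℝ) (z : MV n) : MV n :=
  ((mink n G z / mink n F G) / c) • F
    + (c * (mink n F z / mink n F G)) • G
    + (z - (mink n G z / mink n F G) • F - (mink n F z / mink n F G) • G)

/-- `Γ_Λ^{Λ̂}(1 − t/m) · (d + tη) = d + tη̂` for all `t ≠ m`: the gauge relation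
between the pencils of flat connections of an isothermic surface `S` and of (an
isothermic structure `T` on) its Darboux transform with parameter `m`. -/
def GaugeRel (n : ℕ) (S T : IsothermicSurface n) (m : ℝ) : Prop :=
  ∀ t : ℝ, t ≠ m → ∀ s : Surf → MV n, ContDiff ℝ (⊤ : ℕ∞) s → ∀ x : Surf,
    (fderiv ℝ (fun y => gaugeG n (S.F y) (T.F y) (1 - t / m) (s y)) x du
        + t • wedge n (T.F x) (T.W₁ x) (gaugeG n (S.F x) (T.F x) (1 - t / m) (s x))
      = gaugeG n (S.F x) (T.F x) (1 - t / m)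
          (fderiv ℝ s x du + t • wedge n (S.F x) (S.W₁ x) (s x)))
    ∧ (fderiv ℝ (fun y => gaugeG n (S.F y) (T.F y) (1 - t / m) (s y)) x dv
        + t • wedge n (T.F x) (T.W₂ x) (gaugeG n (S.F x) (T.F x) (1 - t / m) (s x))
      = gaugeG n (S.F x) (T.F x) (1 - t / m)
          (fderiv ℝ s x dv + t • wedge n (S.F x) (S.W₂ x) (s x)))

/-- `Λ̂ = ⟨p(m)⟩` with `(p(m),p(m)) = 0`: the Darboux transform `D` is a
complementary surface of `(Λ,η)` with respect to `p(t)`. -/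
def IsComplementary (n : ℕ) {S : IsothermicSurface n} {d : ℕ}
    (p : PolyConservedQuantity n S d) {m : ℝ} (D : DarbouxTransform n S m) : Prop :=
  (∀ x, mink n (pcEval p m x) (pcEval p m x) = 0) ∧
  (∀ x, Submodule.span ℝ {D.G x} = Submodule.span ℝ {pcEval p m x})

/-- `m` is a repeated root of the (constant-coefficient) polynomial `(p(t),p(t))`. -/
def IsRepeatedRootAt {n : ℕ} {S : IsothermicSurface n} {d : ℕ}
    (p : PolyConservedQuantity n S d) (m : ℝ) : Prop :=
  ∀ x, mink n (pcEval p m x) (pcEval p m x) = 0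
    ∧ deriv (fun t : ℝ => mink n (pcEval p t x) (pcEval p t x)) m = 0
/-- metric coefficient `g₁₁ = (F_u,F_u)` of the induced metric -/
def gUU (n : ℕ) (F : Surf → MV n) (x : Surf) : ℝ := mink n (pd du F x) (pd du F x)

/-- metric coefficient `g₁₂ = (F_u,F_v)` -/
def gUV (n : ℕ) (F : Surf → MV n) (x : Surf) : ℝ := mink n (pd du F x) (pd dv F x)

/-- metric coefficient `g₂₂ = (F_v,F_v)` -/
def gVV (n : ℕ) (F : Surf → MV n) (x : Surf) : ℝ := mink n (pd dv F x) (pd dv F x)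

/-- `(𝐇, N)`, the inner product of the mean curvature vector of `F` (in a
space-form `E(w)`) with a normal field `N`: half the trace with respect to the
induced metric of the `N`-component of the second fundamental form. -/
def meanCurv (n : ℕ) (F N : Surf → MV n) (x : Surf) : ℝ :=
  (gVV n F x * mink n (pd du (pd du F) x) (N x)
    - 2 * gUV n F x * mink n (pd du (pd dv F) x) (N x)
    + gUU n F x * mink n (pd dv (pd dv F) x) (N x))
  / (2 * (gUU n F x * gVV n F x - gUV n F x ^ 2))

/-- `N` is a unit normal field of the lift `F : Σ → E(w)`. -/
def IsUnitNormal (n : ℕ) (F N : Surf → MV n) (w : MV n) : Prop :=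
  (∀ x, mink n (N x) (N x) = 1) ∧ (∀ x, mink n (N x) w = 0)
    ∧ (∀ x, mink n (N x) (F x) = 0)
    ∧ (∀ x, mink n (N x) (pd du F x) = 0) ∧ (∀ x, mink n (N x) (pd dv F x) = 0)

/-- `N` is parallel for the normal connection of `F : Σ → E(w)`: the derivative
of `N` has no component in the normal bundle of `F` in `E(w)`. -/
def ParallelNormal (n : ℕ) (F N : Surf → MV n) (w : MV n) : Prop :=
  ∀ x e, fderiv ℝ N x e ∈ Submodule.span ℝ {F x, pd du F x, pd dv F x, w}

/-- the chart coordinates `(u,v)` are conformal curvature line coordinates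
corresponding to `η`, with conformal factor `e^{2θ}`:
`I = e^{2θ}(du² + dv²)` and `η = e^{−2θ} F ∧ (−F_u du + F_v dv)`. -/
def ConformalCoords (n : ℕ) (S : IsothermicSurface n) (θ : Surf → ℝ) : Prop :=
  ContDiff ℝ (⊤ : ℕ∞) θ
  ∧ (∀ x, mink n (pd du S.F x) (pd du S.F x) = Real.exp (2 * θ x))
  ∧ (∀ x, mink n (pd dv S.F x) (pd dv S.F x) = Real.exp (2 * θ x))
  ∧ (∀ x, mink n (pd du S.F x) (pd dv S.F x) = 0)
  ∧ (∀ x z, wedge n (S.F x) (S.W₁ x) z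
      = Real.exp (-(2 * θ x)) • wedge n (S.F x) (-pd du S.F x) z)
  ∧ (∀ x z, wedge n (S.F x) (S.W₂ x) z
      = Real.exp (-(2 * θ x)) • wedge n (S.F x) (pd dv S.F x) z)

/-- the second fundamental form of the lift `F` in `E(w)` with respect to the
unit normal `N` is `II = e^{2θ}(k₁ du² + k₂ dv²)`. -/
def PrincipalCurvatures (n : ℕ) (S : IsothermicSurface n) (N : Surf → MV n)
    (θ k₁ k₂ : Surf → ℝ) : Prop :=
  (∀ x, mink n (pd du (pd du S.F) x) (N x) = Real.exp (2 * θ x) * k₁ x)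
  ∧ (∀ x, mink n (pd du (pd dv S.F) x) (N x) = 0)
  ∧ (∀ x, mink n (pd dv (pd dv S.F) x) (N x) = Real.exp (2 * θ x) * k₂ x)

/-- partial derivative of a real function on the surface -/
def pdR (e : Surf) (f : Surf → ℝ) (x : Surf) : ℝ := fderiv ℝ f x e
/-- `(Λ^c, η^c)` is the Christoffel transform of `(Λ,η)` with respect to the
pair `(v∞, v₀)`, witnessed by the stereoprojections `f`, `f^c` into
`ℝ^n = ⟨v₀,v∞⟩^⊥`:  `F = exp(f ∧ v∞)v₀`, `F^c = exp(f^c ∧ v₀)v∞`,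
`η = Ad(exp(f ∧ v∞))(df^c ∧ v₀)` and `η^c = Ad(exp(f^c ∧ v₀))(df ∧ v∞)`. -/
def IsChristoffelPair (n : ℕ) (S Sc : IsothermicSurface n) (vinf v0 : MV n)
    (f fc : Surf → MV n) : Prop :=
  vinf ∈ LightCone n ∧ v0 ∈ LightCone n ∧ mink n v0 vinf = -1
  ∧ ContDiff ℝ (⊤ : ℕ∞) f ∧ ContDiff ℝ (⊤ : ℕ∞) fc
  ∧ (∀ x, mink n (f x) v0 = 0) ∧ (∀ x, mink n (f x) vinf = 0)
  ∧ (∀ x, mink n (fc x) v0 = 0) ∧ (∀ x, mink n (fc x) vinf = 0)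
  ∧ (∀ x, S.F x = v0 + f x + (mink n (f x) (f x) / 2) • vinf)
  ∧ (∀ x, Sc.F x = vinf + fc x + (mink n (fc x) (fc x) / 2) • v0)
  ∧ (∀ x z, wedge n (S.F x) (S.W₁ x) z
      = wedge n (pd du fc x + mink n (f x) (pd du fc x) • vinf) (S.F x) z)
  ∧ (∀ x z, wedge n (S.F x) (S.W₂ x) z
      = wedge n (pd dv fc x + mink n (f x) (pd dv fc x) • vinf) (S.F x) z)
  ∧ (∀ x z, wedge n (Sc.F x) (Sc.W₁ x) z
      = wedge n (pd du f x + mink n (fc x) (pd du f x) • v0) (Sc.F x) z)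
  ∧ (∀ x z, wedge n (Sc.F x) (Sc.W₂ x) z
      = wedge n (pd dv f x + mink n (fc x) (pd dv f x) • v0) (Sc.F x) z)

/-- `Φ` is an orthogonal gauge transformation with `Φ · (d + sη) = d`. -/
def IsTGauge (n : ℕ) (S : IsothermicSurface n) (s : ℝ)
    (Φ : Surf → MV n → MV n) : Prop :=
  (∀ x, IsLinearMap ℝ (Φ x))
  ∧ (∀ x z z', mink n (Φ x z) (Φ x z') = mink n z z')
  ∧ (∀ σ : Surf → MV n, ContDiff ℝ (⊤ : ℕ∞) σ → ∀ x,
      (fderiv ℝ (fun y => Φ y (σ y)) x du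
         = Φ x (fderiv ℝ σ x du + s • wedge n (S.F x) (S.W₁ x) (σ x)))
      ∧ (fderiv ℝ (fun y => Φ y (σ y)) x dv
         = Φ x (fderiv ℝ σ x dv + s • wedge n (S.F x) (S.W₂ x) (σ x))))

/-- `(Λ_s, η_s)` is the T-transform of `(Λ,η)` associated to `Φ_s`:
`Λ_s = Φ_s Λ` and `η_s = Ad(Φ_s) η`. -/
def IsTTransform (n : ℕ) (S : IsothermicSurface n) (s : ℝ)
    (Φ : Surf → MV n → MV n) (Ss : IsothermicSurface n) : Prop :=
  IsTGauge n S s Φ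
  ∧ (∀ x, Ss.F x = Φ x (S.F x))
  ∧ (∀ x z, wedge n (Ss.F x) (Ss.W₁ x) (Φ x z) = Φ x (wedge n (S.F x) (S.W₁ x) z))
  ∧ (∀ x z, wedge n (Ss.F x) (Ss.W₂ x) (Φ x z) = Φ x (wedge n (S.F x) (S.W₂ x) z))

/-- orthogonal complement with respect to the Minkowski form -/
def mperp (n : ℕ) (U : Submodule ℝ (MV n)) : Submodule ℝ (MV n) where
  carrier := {v | ∀ u ∈ U, mink n v u = 0}
  add_mem' := by
    intro a b ha hb u hu
    rw [mink_add_left, ha u hu, hb u hu, add_zero]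
  zero_mem' := by
    intro u hu; exact mink_zero_left n u
  smul_mem' := by
    intro r a ha u hu
    rw [mink_smul_left, ha u hu, mul_zero]

/-- the spherical system of `Λ` and a Darboux transform `Λ̂ = ⟨G⟩`: the
`(n−2)`-sphere congruence `C = Λ ⊕ Λ̂ ⊕ V_R^⊥`, `V_R = Λ^{(1)} ⊕ Λ̂`. -/
def sphericalSystem (n : ℕ) (S : IsothermicSurface n) (G : Surf → MV n)
    (x : Surf) : Submodule ℝ (MV n) :=
  Submodule.span ℝ {S.F x, G x}
    ⊔ mperp n (Submodule.span ℝ {S.F x, pd du S.F x, pd dv S.F x, G x})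

/-- the sphere-planes congruence `P = C + ⟨w⟩` of `Λ` and `Λ̂ = ⟨G⟩` with
respect to `w`. -/
def spherePlanes (n : ℕ) (S : IsothermicSurface n) (G : Surf → MV n)
    (w : MV n) (x : Surf) : Submodule ℝ (MV n) :=
  sphericalSystem n S G x ⊔ Submodule.span ℝ {w}

/-! ### Auxiliary lemmas for the proof -/

lemma mink_comm (n : ℕ) (a b : MV n) : mink n a b = mink n b a := by
  simp only [mink, mul_comm]

lemma mink_add_right (n : ℕ) (a b c : MV n) :
    mink n a (b + c) = mink n a b + mink n a c := by
  rw [mink_comm, mink_add_left, mink_comm n b, mink_comm n c]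

lemma mink_smul_right (n : ℕ) (r : ℝ) (a c : MV n) :
    mink n a (r • c) = r * mink n a c := by
  rw [mink_comm, mink_smul_left, mink_comm]

lemma mink_zero_right (n : ℕ) (a : MV n) : mink n a 0 = 0 := by
  rw [mink_comm, mink_zero_left]

lemma mink_neg_left (n : ℕ) (a c : MV n) : mink n (-a) c = - mink n a c := by
  have := mink_smul_left n (-1) a c; simpa using this

lemma mink_sub_left (n : ℕ) (a b c : MV n) :
    mink n (a - b) c = mink n a c - mink n b c := by
  rw [sub_eq_add_neg, mink_add_left, mink_neg_left]; ring

lemma mink_sub_right (n : ℕ) (a b c : MV n) :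
    mink n a (b - c) = mink n a b - mink n a c := by
  rw [mink_comm, mink_sub_left, mink_comm n b, mink_comm n c]

/-- mink as a bilinear map -/
def minkL (n : ℕ) : MV n →ₗ[ℝ] MV n →ₗ[ℝ] ℝ :=
  LinearMap.mk₂ ℝ (mink n) (mink_add_left n) (mink_smul_left n)
    (mink_add_right n) (mink_smul_right n)

def minkCLM (n : ℕ) : MV n →L[ℝ] MV n →L[ℝ] ℝ :=
  LinearMap.toContinuousLinearMap
    { toFun := fun v => LinearMap.toContinuousLinearMap (minkL n v)
      map_add' := by intro a b; ext z; simp [minkL, mink_add_left]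
      map_smul' := by intro r a; ext z; simp [minkL, mink_smul_left] }

@[simp] lemma minkCLM_apply (n : ℕ) (a b : MV n) : minkCLM n a b = mink n a b := rfl

lemma contDiff_mink {n : ℕ} {E : Type*} [NormedAddCommGroup E] [NormedSpace ℝ E]
    {g h : E → MV n} (hg : ContDiff ℝ (⊤ : ℕ∞) g) (hh : ContDiff ℝ (⊤ : ℕ∞) h) :
    ContDiff ℝ (⊤ : ℕ∞) (fun x => mink n (g x) (h x)) := by
  have : ContDiff ℝ (⊤ : ℕ∞) (fun x => (minkCLM n) (g x)) := ((minkCLM n).contDiff).comp hg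
  exact this.clm_apply hh

lemma hasFDerivAt_mink {n : ℕ} {E : Type*} [NormedAddCommGroup E] [NormedSpace ℝ E]
    {g h : E → MV n} {g' h' : E →L[ℝ] MV n} {x : E}
    (hg : HasFDerivAt g g' x) (hh : HasFDerivAt h h' x) :
    HasFDerivAt (fun y => mink n (g y) (h y))
      (((minkCLM n (g x)).comp h') + ((minkCLM n).comp g').flip (h x)) x := by
  have hc : HasFDerivAt (fun y => (minkCLM n) (g y)) ((minkCLM n).comp g') x :=
    ((minkCLM n).hasFDerivAt).comp x hg
  exact hc.clm_apply hh

lemma fderiv_mink_apply {n : ℕ} {E : Type*} [NormedAddCommGroup E] [NormedSpace ℝ E]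
    {g h : E → MV n} {x : E} (hg : DifferentiableAt ℝ g x) (hh : DifferentiableAt ℝ h x)
    (e : E) :
    fderiv ℝ (fun y => mink n (g y) (h y)) x e
      = mink n (fderiv ℝ g x e) (h x) + mink n (g x) (fderiv ℝ h x e) := by
  have := (hasFDerivAt_mink hg.hasFDerivAt hh.hasFDerivAt).fderiv
  rw [this]; simp [add_comm]

lemma differentiableAt_mink {n : ℕ} {E : Type*} [NormedAddCommGroup E] [NormedSpace ℝ E]
    {g h : E → MV n} {x : E} (hg : DifferentiableAt ℝ g x) (hh : DifferentiableAt ℝ h x) :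
    DifferentiableAt ℝ (fun y => mink n (g y) (h y)) x :=
  (hasFDerivAt_mink hg.hasFDerivAt hh.hasFDerivAt).differentiableAt

lemma MV.sum_apply {n : ℕ} {s : Finset ℕ} (g : ℕ → MV n) (i : Fin (n+2)) :
    (∑ k ∈ s, g k) i = ∑ k ∈ s, g k i := by
  induction s using Finset.cons_induction with
  | empty => rfl
  | cons a s ha ih => rw [Finset.sum_cons, Finset.sum_cons, ← ih]; rfl

lemma vec_poly_zero {n m : ℕ} {c : ℕ → MV n}
    (h : ∀ t : ℝ, ∑ k ∈ Finset.range m, t ^ k • c k = 0) :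
    ∀ k, k < m → c k = 0 := by
  intro k hk
  ext i
  have h' : ∀ t : ℝ, (Polynomial.eval t (∑ j ∈ Finset.range m,
      Polynomial.C (c j i) * Polynomial.X ^ j) : ℝ) = 0 := by
    intro t
    have := congrArg (fun v : MV n => v i) (h t)
    simp only [MV.sum_apply, PiLp.smul_apply, smul_eq_mul, PiLp.zero_apply] at this
    simp only [Polynomial.eval_finset_sum, Polynomial.eval_mul, Polynomial.eval_C,
      Polynomial.eval_pow, Polynomial.eval_X]
    rw [← this]
    exact Finset.sum_congr rfl (fun j _ => mul_comm _ _)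
  have hz : (∑ j ∈ Finset.range m, Polynomial.C (c j i) * Polynomial.X ^ j) = 0 :=
    Polynomial.funext (fun r => by rw [h' r]; simp)
  have := congrArg (fun q : Polynomial ℝ => q.coeff k) hz
  simpa [Polynomial.finset_sum_coeff, Polynomial.coeff_C_mul, Polynomial.coeff_X_pow,
    Finset.sum_ite_eq' (Finset.range m), hk] using this

lemma hasDerivAt_mink {n : ℕ} {g h : ℝ → MV n} {gv hv : MV n} {t : ℝ}
    (hg : HasDerivAt g gv t) (hh : HasDerivAt h hv t) :
    HasDerivAt (fun s => mink n (g s) (h s)) (mink n gv (h t) + mink n (g t) hv) t := by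
  have := (hasFDerivAt_mink hg.hasFDerivAt hh.hasFDerivAt).hasDerivAt
  simpa [add_comm] using this

lemma wedge_add_right (n : ℕ) (u v a b : MV n) :
    wedge n u v (a + b) = wedge n u v a + wedge n u v b := by
  simp only [wedge, mink_add_right]; module

lemma wedge_smul_right (n : ℕ) (u v : MV n) (r : ℝ) (a : MV n) :
    wedge n u v (r • a) = r • wedge n u v a := by
  simp only [wedge, mink_smul_right]; module

lemma wedge_sum_right (n : ℕ) (u v : MV n) (s : Finset ℕ) (g : ℕ → MV n) :
    wedge n u v (∑ k ∈ s, g k) = ∑ k ∈ s, wedge n u v (g k) := by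
  induction s using Finset.cons_induction with
  | empty => simp [wedge, mink_zero_right]
  | cons a s ha ih => rw [Finset.sum_cons, Finset.sum_cons, wedge_add_right, ih]

lemma fderiv_poly_sum_apply {n m : ℕ} {c : ℕ → Surf → MV n} {x : Surf}
    (hdiff : ∀ k, DifferentiableAt ℝ (c k) x) (t : ℝ) (e : Surf) :
    fderiv ℝ (fun y => ∑ k ∈ Finset.range m, t ^ k • c k y) x e
      = ∑ k ∈ Finset.range m, t ^ k • fderiv ℝ (c k) x e := by
  have h1 : fderiv ℝ (fun y => ∑ k ∈ Finset.range m, t ^ k • c k y) x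
      = ∑ k ∈ Finset.range m, t ^ k • fderiv ℝ (c k) x := by
    rw [fderiv_fun_sum (A := fun k y => t ^ k • c k y) (fun k _ => (hdiff k).const_smul (t ^ k))]
    exact Finset.sum_congr rfl (fun k _ => fderiv_fun_const_smul (hdiff k) (t ^ k))
  rw [h1]
  simp [ContinuousLinearMap.sum_apply]

set_option maxHeartbeats 1000000 in
/-- Proposition: if `(Λ,η)` is special isothermic of type `d` with
`0 ≠ p(0) ∈ ⟨v∞⟩` and `0` a repeated root of `(p(t),p(t))`, then its
Christoffel transform is special isothermic of type `d−1`. -/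
theorem christoffel_transform_type_pred (n d : ℕ) (hd : 1 ≤ d)
    (S Sc : IsothermicSurface n) (vinf v0 : MV n) (f fc : Surf → MV n)
    (hC : IsChristoffelPair n S Sc vinf v0 f fc)
    (p : PolyConservedQuantity n S d)
    (hp0 : ∃ c : ℝ, c ≠ 0 ∧ ∀ x, p.coeff 0 x = c • vinf)
    (hrr : IsRepeatedRootAt p 0) :
    SpecialOfType n Sc (d - 1) := by
  obtain ⟨hvinf, hv0, hv0inf, hfsm, hfcsm, hfv0, hfvinf, hfcv0, hfcvinf, hF, hFc,
    hW1, hW2, hWc1, hWc2⟩ := hC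
  obtain ⟨c, hc0, hP0⟩ := hp0
  -- basic scalar facts
  have z1 : mink n vinf vinf = 0 := hvinf.2
  have z2 : mink n v0 v0 = 0 := hv0.2
  have z3 : mink n v0 vinf = -1 := hv0inf
  have z4 : mink n vinf v0 = -1 := by rw [mink_comm]; exact hv0inf
  -- differentiability
  have hPdiff : ∀ k, Differentiable ℝ (p.coeff k) := fun k => (p.smooth k).differentiable (by simp)
  have hfdiff : Differentiable ℝ f := hfsm.differentiable (by simp)
  have hfcdiff : Differentiable ℝ fc := hfcsm.differentiable (by simp)
  have hFdiff : Differentiable ℝ S.F := S.smooth_F.differentiable (by simp)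
  have hFcdiff : Differentiable ℝ Sc.F := Sc.smooth_F.differentiable (by simp)
  -- derivative of constancy constraints
  have dconst : ∀ (g : Surf → MV n), Differentiable ℝ g → ∀ (w : MV n),
      (∀ y, mink n (g y) w = 0) → ∀ (x e : Surf), mink n (fderiv ℝ g x e) w = 0 := by
    intro g hg w hgw x e
    have hder : HasFDerivAt (fun y => mink n (g y) w)
        (((minkCLM n (g x)).comp (0 : Surf →L[ℝ] MV n))
          + ((minkCLM n).comp (fderiv ℝ g x)).flip w) x :=
      hasFDerivAt_mink (hg x).hasFDerivAt (hasFDerivAt_const w x)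
    have heq : (fun y => mink n (g y) w) = fun _ : Surf => (0 : ℝ) := funext hgw
    rw [heq] at hder
    have h2 := hder.unique (hasFDerivAt_const (0 : ℝ) x)
    have h3 := congrArg (fun (T : Surf →L[ℝ] ℝ) => T e) h2
    simpa [mink_zero_right] using h3
  have zdf_v0 : ∀ x e, mink n (fderiv ℝ f x e) v0 = 0 := dconst f hfdiff v0 hfv0
  have zdf_vinf : ∀ x e, mink n (fderiv ℝ f x e) vinf = 0 := dconst f hfdiff vinf hfvinf
  have zdfc_v0 : ∀ x e, mink n (fderiv ℝ fc x e) v0 = 0 := dconst fc hfcdiff v0 hfcv0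
  have zdfc_vinf : ∀ x e, mink n (fderiv ℝ fc x e) vinf = 0 := dconst fc hfcdiff vinf hfcvinf
  have zc1 : ∀ x, mink n v0 (f x) = 0 := fun x => by rw [mink_comm]; exact hfv0 x
  have zc2 : ∀ x, mink n vinf (f x) = 0 := fun x => by rw [mink_comm]; exact hfvinf x
  have zc3 : ∀ x, mink n v0 (fc x) = 0 := fun x => by rw [mink_comm]; exact hfcv0 x
  have zc4 : ∀ x, mink n vinf (fc x) = 0 := fun x => by rw [mink_comm]; exact hfcvinf x
  have zc5 : ∀ x e, mink n v0 (fderiv ℝ f x e) = 0 :=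
    fun x e => by rw [mink_comm]; exact zdf_v0 x e
  have zc6 : ∀ x e, mink n vinf (fderiv ℝ f x e) = 0 :=
    fun x e => by rw [mink_comm]; exact zdf_vinf x e
  have zc7 : ∀ x e, mink n v0 (fderiv ℝ fc x e) = 0 :=
    fun x e => by rw [mink_comm]; exact zdfc_v0 x e
  have zc8 : ∀ x e, mink n vinf (fderiv ℝ fc x e) = 0 :=
    fun x e => by rw [mink_comm]; exact zdfc_vinf x e
  -- derivatives of the lifts
  have hliftder : ∀ (g : Surf → MV n), Differentiable ℝ g → ∀ (w0 wi : MV n) (x e : Surf),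
      fderiv ℝ (fun y => w0 + g y + (mink n (g y) (g y) / 2) • wi) x e
        = fderiv ℝ g x e + mink n (g x) (fderiv ℝ g x e) • wi := by
    intro g hg w0 wi x e
    have hfun : (fun y => w0 + g y + (mink n (g y) (g y) / 2) • wi)
        = (fun y => w0 + g y + mink n (g y) (g y) • ((2:ℝ)⁻¹ • wi)) := by
      funext y; rw [smul_smul, div_eq_mul_inv]
    rw [hfun]
    have h1 : HasFDerivAt (fun y => w0 + g y + mink n (g y) (g y) • ((2:ℝ)⁻¹ • wi))
        ((fderiv ℝ g x)
          + ((((minkCLM n (g x)).comp (fderiv ℝ g x))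
              + ((minkCLM n).comp (fderiv ℝ g x)).flip (g x))).smulRight ((2:ℝ)⁻¹ • wi)) x :=
      ((hg x).hasFDerivAt.const_add w0).add
        ((hasFDerivAt_mink (hg x).hasFDerivAt (hg x).hasFDerivAt).smul_const ((2:ℝ)⁻¹ • wi))
    rw [h1.fderiv]
    simp only [ContinuousLinearMap.add_apply, ContinuousLinearMap.smulRight_apply,
      ContinuousLinearMap.comp_apply, ContinuousLinearMap.flip_apply, minkCLM_apply]
    rw [mink_comm n (fderiv ℝ g x e) (g x)]
    module
  have hFfun : S.F = fun y => v0 + f y + (mink n (f y) (f y) / 2) • vinf := funext hF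
  have hFcfun : Sc.F = fun y => vinf + fc y + (mink n (fc y) (fc y) / 2) • v0 := funext hFc
  have hdF : ∀ x e, fderiv ℝ S.F x e
      = fderiv ℝ f x e + mink n (f x) (fderiv ℝ f x e) • vinf := by
    intro x e; rw [hFfun]; exact hliftder f hfdiff v0 vinf x e
  have hdFc : ∀ x e, fderiv ℝ Sc.F x e
      = fderiv ℝ fc x e + mink n (fc x) (fderiv ℝ fc x e) • v0 := by
    intro x e; rw [hFcfun]; exact hliftder fc hfcdiff vinf v0 x e
  -- facts about F
  have hFvinf : ∀ x, mink n (S.F x) vinf = -1 := by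
    intro x; rw [hF x]
    simp only [mink_add_left, mink_smul_left, z1, z3, hfvinf x, mul_zero]; ring
  have hFv0 : ∀ x, mink n (S.F x) v0 = - (mink n (f x) (f x) / 2) := by
    intro x; rw [hF x]
    simp only [mink_add_left, mink_smul_left, z2, z4, hfv0 x]; ring
  have hFcv0 : ∀ x, mink n (Sc.F x) v0 = -1 := by
    intro x; rw [hFc x]
    simp only [mink_add_left, mink_smul_left, z2, z4, hfcv0 x, mul_zero]; ring
  -- extraction of the coefficient equations of the conserved quantity
  have extract : ∀ (e : Surf) (W : Surf → MV n),
      (∀ (t : ℝ) (x : Surf),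
        fderiv ℝ (fun y => ∑ k ∈ Finset.range (d+1), t ^ k • p.coeff k y) x e
          + t • wedge n (S.F x) (W x) (∑ k ∈ Finset.range (d+1), t ^ k • p.coeff k x) = 0) →
      ∀ (x : Surf) (k : ℕ),
        fderiv ℝ (p.coeff (k+1)) x e + wedge n (S.F x) (W x) (p.coeff k x) = 0 := by
    intro e W hcons x k
    have hPtopfun : p.coeff (d+1) = 0 := p.coeff_eq_zero _ (by omega)
    have hdPtop : fderiv ℝ (p.coeff (d+1)) x = 0 := by
      rw [hPtopfun]; exact fderiv_const_apply (0 : MV n)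
    have hsum : ∀ t : ℝ, ∑ j ∈ Finset.range (d+2),
        t ^ j • (Nat.casesOn j (fderiv ℝ (p.coeff 0) x e)
          (fun i => fderiv ℝ (p.coeff (i+1)) x e
            + wedge n (S.F x) (W x) (p.coeff i x)) : MV n) = 0 := by
      intro t
      have h1 := hcons t x
      rw [fderiv_poly_sum_apply (fun k => hPdiff k x) t e] at h1
      have h2 : t • wedge n (S.F x) (W x) (∑ k ∈ Finset.range (d+1), t ^ k • p.coeff k x)
          = ∑ k ∈ Finset.range (d+1), t ^ (k+1) • wedge n (S.F x) (W x) (p.coeff k x) := by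
        rw [wedge_sum_right, Finset.smul_sum]
        exact Finset.sum_congr rfl (fun k _ => by
          rw [wedge_smul_right, smul_smul, pow_succ, mul_comm])
      rw [h2] at h1
      calc ∑ j ∈ Finset.range (d+2),
          t ^ j • (Nat.casesOn j (fderiv ℝ (p.coeff 0) x e)
            (fun i => fderiv ℝ (p.coeff (i+1)) x e
              + wedge n (S.F x) (W x) (p.coeff i x)) : MV n)
          = (∑ i ∈ Finset.range (d+1), (t ^ (i+1) • fderiv ℝ (p.coeff (i+1)) x e
              + t ^ (i+1) • wedge n (S.F x) (W x) (p.coeff i x)))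
            + fderiv ℝ (p.coeff 0) x e := by
            rw [Finset.sum_range_succ']
            simp [smul_add]
        _ = ((∑ i ∈ Finset.range (d+1), t ^ (i+1) • fderiv ℝ (p.coeff (i+1)) x e)
              + ∑ i ∈ Finset.range (d+1), t ^ (i+1) • wedge n (S.F x) (W x) (p.coeff i x))
            + fderiv ℝ (p.coeff 0) x e := by rw [Finset.sum_add_distrib]
        _ = ((∑ i ∈ Finset.range d, t ^ (i+1) • fderiv ℝ (p.coeff (i+1)) x e)
              + ∑ i ∈ Finset.range (d+1), t ^ (i+1) • wedge n (S.F x) (W x) (p.coeff i x))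
            + fderiv ℝ (p.coeff 0) x e := by
            rw [Finset.sum_range_succ (fun i => t ^ (i+1) • fderiv ℝ (p.coeff (i+1)) x e) d]
            rw [hdPtop]
            simp
        _ = (∑ k ∈ Finset.range (d+1), t ^ k • fderiv ℝ (p.coeff k) x e)
              + ∑ i ∈ Finset.range (d+1), t ^ (i+1) • wedge n (S.F x) (W x) (p.coeff i x) := by
            rw [Finset.sum_range_succ' (fun k => t ^ k • fderiv ℝ (p.coeff k) x e) d]
            simp only [pow_zero, one_smul]
            abel
        _ = 0 := h1
    have hall := vec_poly_zero hsum
    rcases le_or_gt k d with hk | hk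
    · exact hall (k+1) (by omega)
    · rw [p.coeff_eq_zero (k+1) (by omega), p.coeff_eq_zero k (by omega)]
      have h0 : fderiv ℝ (0 : Surf → MV n) x = 0 := fderiv_const_apply (0 : MV n)
      rw [h0]
      simp [wedge, mink_zero_right]
  simp only [pd] at hW1 hW2 hWc1 hWc2
  have hRdu : ∀ x k, fderiv ℝ (p.coeff (k+1)) x du
      + wedge n (S.F x) (S.W₁ x) (p.coeff k x) = 0 :=
    extract du S.W₁ (fun t x => (p.conserved t x).1)
  have hRdv : ∀ x k, fderiv ℝ (p.coeff (k+1)) x dv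
      + wedge n (S.F x) (S.W₂ x) (p.coeff k x) = 0 :=
    extract dv S.W₂ (fun t x => (p.conserved t x).2)
  have hRX : ∀ (x e : Surf) (W : Surf → MV n),
      (∀ k, fderiv ℝ (p.coeff (k+1)) x e + wedge n (S.F x) (W x) (p.coeff k x) = 0) →
      (∀ z, wedge n (S.F x) (W x) z
        = wedge n (fderiv ℝ fc x e + mink n (f x) (fderiv ℝ fc x e) • vinf) (S.F x) z) →
      ∀ k, fderiv ℝ (p.coeff (k+1)) x e
        = mink n (S.F x) (p.coeff k x)
            • (fderiv ℝ fc x e + mink n (f x) (fderiv ℝ fc x e) • vinf)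
          - mink n (fderiv ℝ fc x e + mink n (f x) (fderiv ℝ fc x e) • vinf) (p.coeff k x)
            • S.F x := by
    intro x e W h1 h2 k
    have h3 := h1 k
    rw [h2 (p.coeff k x)] at h3
    have h4 := eq_neg_of_add_eq_zero_left h3
    rw [h4]
    simp only [wedge]
    module
  -- the coefficient (p₁, v∞) vanishes (repeated root at 0)
  have ha1 : ∀ x, mink n (p.coeff 1 x) vinf = 0 := by
    intro x
    have hgder : HasDerivAt (fun t : ℝ => ∑ k ∈ Finset.range (d+1), t ^ k • p.coeff k x)
        (p.coeff 1 x) 0 := by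
      have h0 : ∀ k ∈ Finset.range (d+1),
          HasDerivAt (fun t : ℝ => t ^ k • p.coeff k x)
            (((k : ℝ) * (0:ℝ) ^ (k-1)) • p.coeff k x) 0 :=
        fun k _ => (hasDerivAt_pow k 0).smul_const (p.coeff k x)
      have hsum := HasDerivAt.fun_sum h0
      refine hsum.congr_deriv ?_
      rw [Finset.sum_eq_single 1]
      · norm_num
      · intro k _ hk1
        match k with
        | 0 => norm_num
        | 1 => exact absurd rfl hk1
        | (m+2) => simp [zero_pow]
      · intro hnot; exact absurd (Finset.mem_range.2 (by omega)) hnot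
    have hval0 : (∑ k ∈ Finset.range (d+1), ((0:ℝ) ^ k) • p.coeff k x) = c • vinf := by
      rw [Finset.sum_eq_single 0]
      · simp [hP0 x]
      · intro k _ hk0
        match k with
        | 0 => exact absurd rfl hk0
        | (m+1) => simp [zero_pow]
      · intro hnot; exact absurd (Finset.mem_range.2 (by omega)) hnot
    have hd2 := hasDerivAt_mink hgder hgder
    beta_reduce at hd2
    rw [hval0] at hd2
    have hdval := hd2.deriv
    have h2 := (hrr x).2
    unfold pcEval at h2
    rw [hdval] at h2
    simp only [mink_smul_right, mink_smul_left, mink_comm n vinf (p.coeff 1 x)] at h2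
    have h3 : c * mink n (p.coeff 1 x) vinf = 0 := by linarith
    rcases mul_eq_zero.1 h3 with h | h
    · exact absurd h hc0
    · exact h
  -- (p_d, F) ≡ 0
  have hbtd : ∀ x, mink n (p.coeff d x) (S.F x) = 0 := by
    intro x
    by_contra hne
    have h1 := hRdu x d
    have hPtopfun : p.coeff (d+1) = 0 := p.coeff_eq_zero _ (by omega)
    have hdPtop : fderiv ℝ (p.coeff (d+1)) x = 0 := by
      rw [hPtopfun]; exact fderiv_const_apply (0 : MV n)
    rw [hW1 x, hdPtop] at h1
    simp only [ContinuousLinearMap.zero_apply, zero_add] at h1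
    set X := fderiv ℝ fc x du + mink n (f x) (fderiv ℝ fc x du) • vinf with hX
    have hXvinf : mink n X vinf = 0 := by
      rw [hX]
      simp [mink_add_left, mink_smul_left, z1, zdfc_vinf x du]
    have h2 := congrArg (fun v => mink n v vinf) h1
    simp only [wedge, mink_sub_left, mink_smul_left, mink_zero_left] at h2
    rw [hFvinf x, hXvinf] at h2
    have hXPd : mink n X (p.coeff d x) = 0 := by
      have := h2; ring_nf at this ⊢; linarith
    have hFP : mink n (S.F x) (p.coeff d x) ≠ 0 := fun h => hne (by rw [mink_comm]; exact h)
    have h3 : mink n (S.F x) (p.coeff d x) • X = 0 := by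
      have h5 := h1
      simp only [wedge, hXPd, zero_smul, zero_sub, neg_eq_zero] at h5
      exact h5
    have hX0 : X = 0 := by
      rcases smul_eq_zero.1 h3 with h | h
      · exact absurd h hFP
      · exact h
    have h4 : mink n X v0 = 0 := by rw [hX0]; exact mink_zero_left n v0
    rw [hX] at h4
    simp only [mink_add_left, mink_smul_left, z4, zdfc_v0 x du] at h4
    have h4' : mink n (f x) (fderiv ℝ fc x du) = 0 := by linarith
    have hdfc0 : fderiv ℝ fc x du = 0 := by
      have h6 := hX0
      rw [hX, h4'] at h6
      simpa using h6
    have hFc0 : fderiv ℝ Sc.F x du = 0 := by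
      rw [hdFc x du, hdfc0]
      simp [mink_zero_right]
    have him := (Sc.immersed x).ne_zero 1
    apply him
    show ![Sc.F x, pd du Sc.F x, pd dv Sc.F x] 1 = 0
    simp [pd, hFc0]
  have hRXdu : ∀ x k, fderiv ℝ (p.coeff (k+1)) x du
      = mink n (S.F x) (p.coeff k x)
          • (fderiv ℝ fc x du + mink n (f x) (fderiv ℝ fc x du) • vinf)
        - mink n (fderiv ℝ fc x du + mink n (f x) (fderiv ℝ fc x du) • vinf) (p.coeff k x)
          • S.F x := fun x => hRX x du S.W₁ (hRdu x) (hW1 x)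
  have hRXdv : ∀ x k, fderiv ℝ (p.coeff (k+1)) x dv
      = mink n (S.F x) (p.coeff k x)
          • (fderiv ℝ fc x dv + mink n (f x) (fderiv ℝ fc x dv) • vinf)
        - mink n (fderiv ℝ fc x dv + mink n (f x) (fderiv ℝ fc x dv) • vinf) (p.coeff k x)
          • S.F x := fun x => hRX x dv S.W₂ (hRdv x) (hW2 x)
  -- the candidate conserved quantity of the Christoffel transform
  set Qf : ℕ → Surf → MV n := fun k y =>
    (-mink n (p.coeff k y) (S.F y)) • Sc.F y
    + (p.coeff (k+1) y + mink n (p.coeff (k+1) y) vinf • v0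
       + mink n (p.coeff (k+1) y) v0 • vinf + mink n (p.coeff (k+1) y) vinf • f y)
    + (-mink n (p.coeff (k+2) y) vinf + mink n (p.coeff (k+1) y) (fc y)
       + mink n (p.coeff (k+1) y) vinf * mink n (fc y) (f y)) • v0 with hQf
  have hQsm : ∀ k, ContDiff ℝ (⊤ : ℕ∞) (Qf k) := by
    intro k
    simp only [hQf]
    exact ContDiff.add (ContDiff.add
      (((contDiff_mink (p.smooth k) S.smooth_F).neg).smul Sc.smooth_F)
      ((((p.smooth (k+1)).add
          ((contDiff_mink (p.smooth (k+1)) contDiff_const).smul contDiff_const)).add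
          ((contDiff_mink (p.smooth (k+1)) contDiff_const).smul contDiff_const)).add
          ((contDiff_mink (p.smooth (k+1)) contDiff_const).smul hfsm)))
      (((((contDiff_mink (p.smooth (k+2)) contDiff_const).neg).add
          (contDiff_mink (p.smooth (k+1)) hfcsm)).add
          ((contDiff_mink (p.smooth (k+1)) contDiff_const).mul
            (contDiff_mink hfcsm hfsm))).smul contDiff_const)
  have hQdiff : ∀ k, Differentiable ℝ (Qf k) := fun k => (hQsm k).differentiable (by simp)
  -- structural derivative of Qf
  have hQder : ∀ (k : ℕ) (x e : Surf), fderiv ℝ (Qf k) x e =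
      (-(mink n (fderiv ℝ (p.coeff k) x e) (S.F x)
          + mink n (p.coeff k x) (fderiv ℝ S.F x e))) • Sc.F x
      + (-mink n (p.coeff k x) (S.F x)) • fderiv ℝ Sc.F x e
      + (fderiv ℝ (p.coeff (k+1)) x e
         + (mink n (fderiv ℝ (p.coeff (k+1)) x e) vinf) • v0
         + (mink n (fderiv ℝ (p.coeff (k+1)) x e) v0) • vinf
         + ((mink n (fderiv ℝ (p.coeff (k+1)) x e) vinf) • f x
            + mink n (p.coeff (k+1) x) vinf • fderiv ℝ f x e))
      + (-(mink n (fderiv ℝ (p.coeff (k+2)) x e) vinf)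
         + (mink n (fderiv ℝ (p.coeff (k+1)) x e) (fc x)
            + mink n (p.coeff (k+1) x) (fderiv ℝ fc x e))
         + ((mink n (fderiv ℝ (p.coeff (k+1)) x e) vinf) * mink n (fc x) (f x)
            + mink n (p.coeff (k+1) x) vinf
              * (mink n (fderiv ℝ fc x e) (f x) + mink n (fc x) (fderiv ℝ f x e)))) • v0 := by
    intro k x e
    simp only [hQf]
    have hbig := (HasFDerivAt.add (HasFDerivAt.add
        (((hasFDerivAt_mink ((hPdiff k) x).hasFDerivAt (hFdiff x).hasFDerivAt).neg).smul
          (hFcdiff x).hasFDerivAt)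
        (((((hPdiff (k+1)) x).hasFDerivAt.add
            ((hasFDerivAt_mink ((hPdiff (k+1)) x).hasFDerivAt
              (hasFDerivAt_const vinf x)).smul_const v0)).add
            ((hasFDerivAt_mink ((hPdiff (k+1)) x).hasFDerivAt
              (hasFDerivAt_const v0 x)).smul_const vinf)).add
            ((hasFDerivAt_mink ((hPdiff (k+1)) x).hasFDerivAt
              (hasFDerivAt_const vinf x)).smul (hfdiff x).hasFDerivAt)))
        (((((hasFDerivAt_mink ((hPdiff (k+2)) x).hasFDerivAt
              (hasFDerivAt_const vinf x)).neg).add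
            (hasFDerivAt_mink ((hPdiff (k+1)) x).hasFDerivAt (hfcdiff x).hasFDerivAt)).add
            ((hasFDerivAt_mink ((hPdiff (k+1)) x).hasFDerivAt
              (hasFDerivAt_const vinf x)).mul
              (hasFDerivAt_mink (hfcdiff x).hasFDerivAt (hfdiff x).hasFDerivAt))).smul_const v0))
    erw [hbig.fderiv]
    simp only [ContinuousLinearMap.add_apply, ContinuousLinearMap.comp_apply,
      ContinuousLinearMap.flip_apply, ContinuousLinearMap.smulRight_apply,
      ContinuousLinearMap.smul_apply, ContinuousLinearMap.neg_apply,
      ContinuousLinearMap.zero_apply, minkCLM_apply, mink_zero_right, add_zero, smul_eq_mul,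
      Pi.neg_apply, Pi.add_apply, Pi.mul_apply]
    module
  -- key identity A: derivative of Qf k
  have hKA : ∀ (x e : Surf),
      (∀ k, fderiv ℝ (p.coeff (k+1)) x e
        = mink n (S.F x) (p.coeff k x)
            • (fderiv ℝ fc x e + mink n (f x) (fderiv ℝ fc x e) • vinf)
          - mink n (fderiv ℝ fc x e + mink n (f x) (fderiv ℝ fc x e) • vinf) (p.coeff k x)
            • S.F x) →
      ∀ k, fderiv ℝ (Qf k) x e
        = (-(mink n (fderiv ℝ (p.coeff k) x e) (S.F x)
            + mink n (p.coeff k x) (fderiv ℝ S.F x e))) • Sc.F x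
          + mink n (p.coeff (k+1) x) vinf
            • (fderiv ℝ f x e + mink n (fc x) (fderiv ℝ f x e) • v0) := by
    intro x e hR k
    have hR2 := hR (k+1)
    rw [show k+1+1 = k+2 from rfl] at hR2
    rw [hQder k x e, hR k, hR2, hdF x e, hdFc x e, hF x, hFc x]
    simp only [mink_add_left, mink_add_right, mink_smul_left, mink_smul_right,
      mink_sub_left, mink_sub_right]
    simp only [z1, z2, z3, z4, hfv0 x, hfvinf x, hfcv0 x, hfcvinf x,
      zdf_v0 x e, zdf_vinf x e, zdfc_v0 x e, zdfc_vinf x e,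
      zc1 x, zc2 x, zc3 x, zc4 x, zc5 x e, zc6 x e, zc7 x e, zc8 x e]
    simp only [mink_comm n vinf (p.coeff k x), mink_comm n v0 (p.coeff k x),
      mink_comm n vinf (p.coeff (k+1) x), mink_comm n v0 (p.coeff (k+1) x),
      mink_comm n vinf (p.coeff (k+2) x), mink_comm n v0 (p.coeff (k+2) x),
      mink_comm n (f x) (p.coeff k x), mink_comm n (f x) (p.coeff (k+1) x),
      mink_comm n (f x) (p.coeff (k+2) x),
      mink_comm n (fc x) (p.coeff k x), mink_comm n (fc x) (p.coeff (k+1) x),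
      mink_comm n (fc x) (p.coeff (k+2) x),
      mink_comm n (fderiv ℝ fc x e) (p.coeff k x),
      mink_comm n (fderiv ℝ fc x e) (p.coeff (k+1) x),
      mink_comm n (fderiv ℝ fc x e) (p.coeff (k+2) x),
      mink_comm n (fderiv ℝ f x e) (p.coeff k x),
      mink_comm n (fderiv ℝ f x e) (p.coeff (k+1) x),
      mink_comm n (fderiv ℝ f x e) (p.coeff (k+2) x),
      mink_comm n (fderiv ℝ fc x e) (f x), mink_comm n (fderiv ℝ fc x e) (fc x),
      mink_comm n (fderiv ℝ f x e) (f x), mink_comm n (fderiv ℝ f x e) (fc x),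
      mink_comm n (f x) (fc x)]
    match_scalars <;> ring
  -- key identity B: wedge of Qf k
  have hKB : ∀ (x e : Surf),
      (∀ k, fderiv ℝ (p.coeff (k+1)) x e
        = mink n (S.F x) (p.coeff k x)
            • (fderiv ℝ fc x e + mink n (f x) (fderiv ℝ fc x e) • vinf)
          - mink n (fderiv ℝ fc x e + mink n (f x) (fderiv ℝ fc x e) • vinf) (p.coeff k x)
            • S.F x) →
      ∀ k, wedge n (fderiv ℝ f x e + mink n (fc x) (fderiv ℝ f x e) • v0) (Sc.F x) (Qf k x)
        = -((-(mink n (fderiv ℝ (p.coeff (k+1)) x e) (S.F x)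
              + mink n (p.coeff (k+1) x) (fderiv ℝ S.F x e))) • Sc.F x
            + mink n (p.coeff (k+2) x) vinf
              • (fderiv ℝ f x e + mink n (fc x) (fderiv ℝ f x e) • v0)) := by
    intro x e hR k
    simp only [hQf, wedge]
    rw [hR k, hdF x e, hF x, hFc x]
    simp only [mink_add_left, mink_add_right, mink_smul_left, mink_smul_right,
      mink_sub_left, mink_sub_right]
    simp only [z1, z2, z3, z4, hfv0 x, hfvinf x, hfcv0 x, hfcvinf x,
      zdf_v0 x e, zdf_vinf x e, zdfc_v0 x e, zdfc_vinf x e,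
      zc1 x, zc2 x, zc3 x, zc4 x, zc5 x e, zc6 x e, zc7 x e, zc8 x e]
    simp only [mink_comm n vinf (p.coeff k x), mink_comm n v0 (p.coeff k x),
      mink_comm n vinf (p.coeff (k+1) x), mink_comm n v0 (p.coeff (k+1) x),
      mink_comm n vinf (p.coeff (k+2) x), mink_comm n v0 (p.coeff (k+2) x),
      mink_comm n (f x) (p.coeff k x), mink_comm n (f x) (p.coeff (k+1) x),
      mink_comm n (f x) (p.coeff (k+2) x),
      mink_comm n (fc x) (p.coeff k x), mink_comm n (fc x) (p.coeff (k+1) x),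
      mink_comm n (fc x) (p.coeff (k+2) x),
      mink_comm n (fderiv ℝ fc x e) (p.coeff k x),
      mink_comm n (fderiv ℝ fc x e) (p.coeff (k+1) x),
      mink_comm n (fderiv ℝ fc x e) (p.coeff (k+2) x),
      mink_comm n (fderiv ℝ f x e) (p.coeff k x),
      mink_comm n (fderiv ℝ f x e) (p.coeff (k+1) x),
      mink_comm n (fderiv ℝ f x e) (p.coeff (k+2) x),
      mink_comm n (fderiv ℝ fc x e) (f x), mink_comm n (fderiv ℝ fc x e) (fc x),
      mink_comm n (fderiv ℝ f x e) (f x), mink_comm n (fderiv ℝ f x e) (fc x),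
      mink_comm n (f x) (fc x)]
    match_scalars <;> ring
  -- derivative of (p_d, F) ≡ 0
  have hprod0 : ∀ x e, mink n (fderiv ℝ (p.coeff d) x e) (S.F x)
      + mink n (p.coeff d x) (fderiv ℝ S.F x e) = 0 := by
    intro x e
    have hder := hasFDerivAt_mink ((hPdiff d) x).hasFDerivAt (hFdiff x).hasFDerivAt
    have heq : (fun y => mink n (p.coeff d y) (S.F y)) = fun _ : Surf => (0:ℝ) :=
      funext hbtd
    rw [heq] at hder
    have h2 := hder.unique (hasFDerivAt_const (0:ℝ) x)
    have h3 := congrArg (fun T : Surf →L[ℝ] ℝ => T e) h2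
    simp only [ContinuousLinearMap.add_apply, ContinuousLinearMap.comp_apply,
      ContinuousLinearMap.flip_apply, ContinuousLinearMap.zero_apply, minkCLM_apply] at h3
    linarith [h3]
  have hdP0 : ∀ x, fderiv ℝ (p.coeff 0) x = 0 := by
    intro x
    have h0 : p.coeff 0 = fun _ : Surf => c • vinf := funext hP0
    rw [h0]
    exact fderiv_const_apply (c • vinf)
  have hPtopfun : p.coeff (d+1) = 0 := p.coeff_eq_zero _ (by omega)
  -- the conservation law for the new quantity
  have hcons : ∀ (t : ℝ) (x e : Surf) (W : Surf → MV n),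
      (∀ z, wedge n (Sc.F x) (W x) z
        = wedge n (fderiv ℝ f x e + mink n (fc x) (fderiv ℝ f x e) • v0) (Sc.F x) z) →
      (∀ k, fderiv ℝ (p.coeff (k+1)) x e
        = mink n (S.F x) (p.coeff k x)
            • (fderiv ℝ fc x e + mink n (f x) (fderiv ℝ fc x e) • vinf)
          - mink n (fderiv ℝ fc x e + mink n (f x) (fderiv ℝ fc x e) • vinf) (p.coeff k x)
            • S.F x) →
      fderiv ℝ (fun y => ∑ k ∈ Finset.range (d - 1 + 1), t ^ k • Qf k y) x e
        + t • wedge n (Sc.F x) (W x) (∑ k ∈ Finset.range (d - 1 + 1), t ^ k • Qf k x) = 0 := by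
    intro t x e W hW hR
    have hd1 : d - 1 + 1 = d := by omega
    rw [hd1, fderiv_poly_sum_apply (fun k => (hQdiff k) x) t e, hW, wedge_sum_right,
      Finset.smul_sum]
    have hstep : ∀ k ∈ Finset.range d,
        t ^ k • fderiv ℝ (Qf k) x e
          + t • wedge n (fderiv ℝ f x e + mink n (fc x) (fderiv ℝ f x e) • v0) (Sc.F x)
              (t ^ k • Qf k x)
        = (fun j => t ^ j • ((-(mink n (fderiv ℝ (p.coeff j) x e) (S.F x)
              + mink n (p.coeff j x) (fderiv ℝ S.F x e))) • Sc.F x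
            + mink n (p.coeff (j+1) x) vinf
              • (fderiv ℝ f x e + mink n (fc x) (fderiv ℝ f x e) • v0))) k
          - (fun j => t ^ j • ((-(mink n (fderiv ℝ (p.coeff j) x e) (S.F x)
              + mink n (p.coeff j x) (fderiv ℝ S.F x e))) • Sc.F x
            + mink n (p.coeff (j+1) x) vinf
              • (fderiv ℝ f x e + mink n (fc x) (fderiv ℝ f x e) • v0))) (k+1) := by
      intro k _
      rw [wedge_smul_right, hKA x e hR k, hKB x e hR k]
      simp only [show k+1+1 = k+2 from rfl]
      rw [smul_smul, mul_comm t (t ^ k), ← pow_succ]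
      module
    rw [Finset.sum_add_distrib.symm]
    rw [Finset.sum_congr rfl hstep, Finset.sum_range_sub']
    -- boundary terms vanish
    have hg0 : mink n (fderiv ℝ (p.coeff 0) x e) (S.F x)
        + mink n (p.coeff 0 x) (fderiv ℝ S.F x e) = 0 := by
      rw [hdP0 x]
      simp only [ContinuousLinearMap.zero_apply, mink_zero_left, zero_add]
      rw [hP0 x, hdF x e]
      simp [mink_smul_left, mink_add_right, mink_smul_right, z1, zc6 x e]
    have hgd1 : mink n (p.coeff (0+1) x) vinf = 0 := ha1 x
    have hgd2 : mink n (p.coeff (d+1) x) vinf = 0 := by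
      rw [hPtopfun]; simp [mink_zero_left]
    rw [hg0, hgd1, hgd2, hprod0 x e]
    simp
  -- assemble the polynomial conserved quantity for the Christoffel transform
  refine ⟨⟨Qf, hQsm, ?_, ?_, ?_⟩⟩
  · -- coeff_eq_zero
    intro k hk
    funext x
    have hk1 : p.coeff (k+1) = 0 := p.coeff_eq_zero _ (by omega)
    have hk2 : p.coeff (k+2) = 0 := p.coeff_eq_zero _ (by omega)
    have hbtk : mink n (p.coeff k x) (S.F x) = 0 := by
      rcases eq_or_lt_of_le (show d ≤ k from by omega) with h | h
      · rw [← h]; exact hbtd x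
      · rw [p.coeff_eq_zero k (by omega)]
        simp [mink_zero_left]
    simp [hQf, hk1, hk2, hbtk, mink_zero_left]
  · -- top_ne
    intro hQ0
    apply p.top_ne
    have hd1 : d - 1 + 1 = d := by omega
    have hd2 : d - 1 + 2 = d + 1 := by omega
    have hQx : ∀ y, Qf (d-1) y = 0 := fun y => congrFun hQ0 y
    -- (p_{d-1}, F) ≡ 0
    have hbt1 : ∀ y, mink n (p.coeff (d-1) y) (S.F y) = 0 := by
      intro y
      have h1 := congrArg (fun v => mink n v v0) (hQx y)
      simp only [hQf, hd1, hd2, hPtopfun, Pi.zero_apply] at h1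
      simp only [mink_add_left, mink_smul_left, mink_zero_left, mink_neg_left] at h1
      rw [hFcv0 y, z2, z4, hfv0 y] at h1
      ring_nf at h1 ⊢
      linarith [h1]
    -- lambda coefficient vanishes
    have hlam0 : ∀ y, mink n (p.coeff d y) (fc y)
        + mink n (p.coeff d y) vinf * mink n (fc y) (f y) = 0 := by
      intro y
      have h1 := congrArg (fun v => mink n v vinf) (hQx y)
      simp only [hQf, hd1, hd2, hPtopfun, Pi.zero_apply] at h1
      simp only [mink_add_left, mink_smul_left, mink_zero_left, mink_neg_left] at h1
      rw [hbt1 y, z1, z3, hfvinf y] at h1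
      ring_nf at h1 ⊢
      linarith [h1]
    -- rho_d vanishes
    have hrho : ∀ y, p.coeff d y + mink n (p.coeff d y) vinf • v0
        + mink n (p.coeff d y) v0 • vinf + mink n (p.coeff d y) vinf • f y = 0 := by
      intro y
      have h1 := hQx y
      simp only [hQf, hd1, hd2, hPtopfun, Pi.zero_apply] at h1
      rw [hbt1 y] at h1
      have h2 := hlam0 y
      rw [show -mink n (0 : MV n) vinf = 0 from by rw [mink_zero_left]; ring] at h1
      have h3 : (0 + mink n (p.coeff d y) (fc y)
          + mink n (p.coeff d y) vinf * mink n (fc y) (f y)) = 0 := by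
        rw [zero_add]; exact h2
      rw [h3] at h1
      simpa using h1
    -- p_d is proportional to F
    have hPdF : ∀ y, p.coeff d y = (-mink n (p.coeff d y) vinf) • S.F y := by
      intro y
      have e4 : mink n (p.coeff d y) (f y)
          = -(mink n (p.coeff d y) vinf * mink n (f y) (f y)) := by
        have h1 := congrArg (fun v => mink n v (f y)) (hrho y)
        simp only [mink_add_left, mink_smul_left, mink_zero_left,
          zc1 y, zc2 y] at h1
        linarith [h1]
      have h6 := hbtd y
      rw [hF y] at h6
      simp only [mink_add_right, mink_smul_right] at h6
      have hb : mink n (p.coeff d y) v0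
          = mink n (p.coeff d y) vinf * (mink n (f y) (f y) / 2) := by
        linear_combination h6 - e4
      have h7 := hrho y
      have h8 : p.coeff d y = -(mink n (p.coeff d y) vinf • v0)
          - mink n (p.coeff d y) v0 • vinf
          - mink n (p.coeff d y) vinf • f y := by
        linear_combination (norm := module) h7
      conv_lhs => rw [h8]
      rw [hb, hF y]
      module
    -- differentiate and use that S is immersed
    funext x
    have halsm : ContDiff ℝ (⊤ : ℕ∞) (fun z => -mink n (p.coeff d z) vinf) :=
      (contDiff_mink (p.smooth d) contDiff_const).neg
    have hPdfun : p.coeff d = fun y => (-mink n (p.coeff d y) vinf) • S.F y := funext hPdF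
    have hal0 : (-mink n (p.coeff d x) vinf) = 0 := by
      have halder : fderiv ℝ (p.coeff d) x du
          = (fderiv ℝ (fun z => -mink n (p.coeff d z) vinf) x du) • S.F x
            + (-mink n (p.coeff d x) vinf) • fderiv ℝ S.F x du := by
        conv_lhs => rw [hPdfun]
        have hb := ((halsm.differentiable (by simp) x).hasFDerivAt.smul (hFdiff x).hasFDerivAt)
        erw [hb.fderiv]
        simp only [ContinuousLinearMap.add_apply, ContinuousLinearMap.smul_apply,
          ContinuousLinearMap.smulRight_apply]
        module
      have hRd1 := hRdu x (d-1)
      rw [hd1, hW1 x] at hRd1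
      have h7 := eq_neg_of_add_eq_zero_left hRd1
      rw [halder] at h7
      simp only [wedge] at h7
      rw [show mink n (S.F x) (p.coeff (d-1) x) = 0 from by
        rw [mink_comm]; exact hbt1 x] at h7
      simp only [zero_smul, sub_zero] at h7
      have hzero : (∑ i, (![-(mink n (fderiv ℝ fc x du
            + mink n (f x) (fderiv ℝ fc x du) • vinf) (p.coeff (d-1) x))
            - fderiv ℝ (fun z => -mink n (p.coeff d z) vinf) x du,
            -(-mink n (p.coeff d x) vinf), 0] i)
          • (![S.F x, pd du S.F x, pd dv S.F x] i)) = 0 := by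
        simp only [Fin.sum_univ_three, Matrix.cons_val_zero, Matrix.cons_val_one,
          Matrix.head_cons, Matrix.cons_val_two, Matrix.tail_cons, pd]
        linear_combination (norm := module) -h7
      have him := Fintype.linearIndependent_iff.1 (S.immersed x) _ hzero 1
      simp only [Matrix.cons_val_one, Matrix.head_cons] at him
      simpa using him
    rw [hPdfun]
    show (-mink n (p.coeff d x) vinf) • S.F x = 0
    rw [hal0, zero_smul]
  · -- conserved
    intro t x
    constructor
    · exact hcons t x du Sc.W₁ (hWc1 x) (hRXdu x)
    · exact hcons t x dv Sc.W₂ (hWc2 x) (hRXdv x)
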